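/- Let L be a modular lattice, d, e, f ∈ L with d ⊓ (e ⊔ f) > (d ⊓ e) ⊔ (d ⊓ f). Define p = (d ⊓ e) ⊔ (e ⊓ f) ⊔ (f ⊓ d), q = (d ⊔ e) ⊓ (e ⊔ f) ⊓ (f ⊔ d), u = (d ⊓ q) ⊔ p, v = (e ⊓ q) ⊔ p, w = (f ⊓ q) ⊔ p. Then the five elements p, q, u, v, w are pairwise distinct. -/

import Mathlib

/-!
Write `p` and `q` for the lower and upper medians of `d, e, f`, which coincide in a distributive
lattice. By modularity `d ⊓ p = (d ⊓ e) ⊔ (d ⊓ f)`, while `d ⊓ q = d ⊓ (e ⊔ f)`, so the hypothesis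
forces `p < q`. Modularity also shows that any two of `u, v, w` join to `q` and meet in `p`; the
statement about meets is the order dual of the one about joins once `u` is rewritten as
`(d ⊔ p) ⊓ q`. So `p, u, v, w, q` form a copy of the diamond `M₃`, and in any lattice such a
configuration with `p ≠ q` has five distinct elements: `u = p`, say, would give `v = u ⊔ v = q`,
likewise `w = q`, and then `p = v ⊓ w = q`.
-/

section Lattice

variable {α : Type*} [Lattice α] {p q u v w : α}

theorem eq_of_sup_eq_of_sup_eq_of_inf_eq (huv : u ⊔ v = q) (huw : u ⊔ w = q)
    (hvw : v ⊓ w = u) : u = q := by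
  have hv : v = q := by rw [← huv, ← hvw, sup_eq_right.2 inf_le_left]
  have hw : w = q := by rw [← huw, ← hvw, sup_eq_right.2 inf_le_right]
  rw [← hvw, hv, hw, inf_idem]

theorem eq_of_inf_eq_of_inf_eq_of_sup_eq (huv : u ⊓ v = p) (huw : u ⊓ w = p)
    (hvw : v ⊔ w = u) : u = p :=
  eq_of_sup_eq_of_sup_eq_of_inf_eq (α := αᵒᵈ) huv huw hvw

theorem pairwise_ne_of_sup_eq_of_inf_eq (hpq : p ≠ q)
    (huv : u ⊔ v = q) (huw : u ⊔ w = q) (hvw : v ⊔ w = q)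
    (huv' : u ⊓ v = p) (huw' : u ⊓ w = p) (hvw' : v ⊓ w = p) :
    p ≠ q ∧ p ≠ u ∧ p ≠ v ∧ p ≠ w ∧ q ≠ u ∧ q ≠ v ∧ q ≠ w ∧
      u ≠ v ∧ u ≠ w ∧ v ≠ w := by
  have hvu : v ⊔ u = q := (sup_comm v u).trans huv
  have hwu : w ⊔ u = q := (sup_comm w u).trans huw
  have hwv : w ⊔ v = q := (sup_comm w v).trans hvw
  have hvu' : v ⊓ u = p := (inf_comm v u).trans huv'
  have hwu' : w ⊓ u = p := (inf_comm w u).trans huw'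
  have hwv' : w ⊓ v = p := (inf_comm w v).trans hvw'
  refine ⟨hpq, fun hu ↦ ?_, fun hv ↦ ?_, fun hw ↦ ?_, fun hu ↦ ?_, fun hv ↦ ?_, fun hw ↦ ?_,
    fun he ↦ ?_, fun he ↦ ?_, fun he ↦ ?_⟩
  · exact hpq (hu.trans (eq_of_sup_eq_of_sup_eq_of_inf_eq huv huw (hvw'.trans hu)))
  · exact hpq (hv.trans (eq_of_sup_eq_of_sup_eq_of_inf_eq hvu hvw (huw'.trans hv)))
  · exact hpq (hw.trans (eq_of_sup_eq_of_sup_eq_of_inf_eq hwu hwv (huv'.trans hw)))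
  · exact hpq ((eq_of_inf_eq_of_inf_eq_of_sup_eq huv' huw' (hvw.trans hu)).symm.trans hu.symm)
  · exact hpq ((eq_of_inf_eq_of_inf_eq_of_sup_eq hvu' hvw' (huw.trans hv)).symm.trans hv.symm)
  · exact hpq ((eq_of_inf_eq_of_inf_eq_of_sup_eq hwu' hwv' (huv.trans hw)).symm.trans hw.symm)
  · exact hpq (by rw [← huv', ← huv, he, inf_idem, sup_idem])
  · exact hpq (by rw [← huw', ← huw, he, inf_idem, sup_idem])
  · exact hpq (by rw [← hvw', ← hvw, he, inf_idem, sup_idem])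

end Lattice

section Median

variable {L : Type*} [Lattice L]

def lowerMedian (a b c : L) : L := (a ⊓ b) ⊔ (b ⊓ c) ⊔ (c ⊓ a)

def upperMedian (a b c : L) : L := (a ⊔ b) ⊓ (b ⊔ c) ⊓ (c ⊔ a)

theorem lowerMedian_rotate (a b c : L) : lowerMedian b c a = lowerMedian a b c := by
  unfold lowerMedian; ac_rfl

theorem upperMedian_rotate (a b c : L) : upperMedian b c a = upperMedian a b c := by
  unfold upperMedian; ac_rfl

theorem lowerMedian_le_upperMedian (a b c : L) : lowerMedian a b c ≤ upperMedian a b c := by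
  unfold lowerMedian upperMedian
  refine sup_le (sup_le ?_ ?_) ?_ <;> refine le_inf (le_inf ?_ ?_) ?_ <;>
    simp [le_sup_of_le_left, le_sup_of_le_right]

theorem inf_upperMedian (a b c : L) : a ⊓ upperMedian a b c = a ⊓ (b ⊔ c) := by
  unfold upperMedian
  refine le_antisymm (le_inf inf_le_left (inf_le_of_right_le (inf_le_of_left_le inf_le_right))) ?_
  simp

section Modular

variable [IsModularLattice L]

theorem inf_lowerMedian (a b c : L) : a ⊓ lowerMedian a b c = (a ⊓ b) ⊔ (a ⊓ c) := calc
  a ⊓ lowerMedian a b c = a ⊓ ((b ⊓ c) ⊔ ((a ⊓ b) ⊔ (a ⊓ c))) := by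
    unfold lowerMedian; ac_rfl
  _ = (a ⊓ (b ⊓ c)) ⊔ ((a ⊓ b) ⊔ (a ⊓ c)) :=
    (inf_sup_assoc_of_le _ (sup_le inf_le_left inf_le_left)).symm
  _ = (a ⊓ b) ⊔ (a ⊓ c) := sup_eq_right.2 (le_sup_of_le_left (inf_le_inf_left a inf_le_left))

theorem lowerMedian_lt_upperMedian {a b c : L} (h : (a ⊓ b) ⊔ (a ⊓ c) < a ⊓ (b ⊔ c)) :
    lowerMedian a b c < upperMedian a b c := by
  refine (lowerMedian_le_upperMedian a b c).lt_of_ne fun hPQ ↦ h.ne ?_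
  rw [← inf_lowerMedian, ← inf_upperMedian, hPQ]

theorem inf_upperMedian_sup_inf_upperMedian (a b c : L) :
    (a ⊓ upperMedian a b c) ⊔ (b ⊓ upperMedian a b c) = upperMedian a b c := by
  have hQ : upperMedian a b c ≤ a ⊓ upperMedian a b c ⊔ b := calc
    upperMedian a b c ≤ (b ⊔ a) ⊓ (b ⊔ c) := by
      unfold upperMedian; exact le_inf (inf_le_of_left_le (inf_le_of_left_le (sup_comm a b).le))
        (inf_le_of_left_le inf_le_right)
    _ = b ⊔ a ⊓ (b ⊔ c) := sup_inf_assoc_of_le a le_sup_left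
    _ = a ⊓ upperMedian a b c ⊔ b := by rw [inf_upperMedian, sup_comm]
  rw [IsModularLattice.inf_sup_inf_assoc, inf_eq_right.2 hQ]

theorem inf_upperMedian_sup_lowerMedian_sup (a b c : L) :
    (a ⊓ upperMedian a b c ⊔ lowerMedian a b c) ⊔ (b ⊓ upperMedian a b c ⊔ lowerMedian a b c) =
      upperMedian a b c := by
  rw [sup_sup_sup_comm, sup_idem, inf_upperMedian_sup_inf_upperMedian,
    sup_eq_left.2 (lowerMedian_le_upperMedian a b c)]

theorem inf_upperMedian_sup_lowerMedian_inf (a b c : L) :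
    (a ⊓ upperMedian a b c ⊔ lowerMedian a b c) ⊓ (b ⊓ upperMedian a b c ⊔ lowerMedian a b c) =
      lowerMedian a b c := by
  have hu (x : L) : x ⊓ upperMedian a b c ⊔ lowerMedian a b c =
      (x ⊔ lowerMedian a b c) ⊓ upperMedian a b c := by
    rw [inf_comm, inf_comm _ (upperMedian a b c)]
    exact inf_sup_assoc_of_le x (lowerMedian_le_upperMedian a b c)
  rw [hu, hu]
  exact inf_upperMedian_sup_lowerMedian_sup (L := Lᵒᵈ) a b c

end Modular

end Median

theorem diamond_distinct {L : Type*} [Lattice L] [IsModularLattice L] (d e f : L)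
    (h : d ⊓ (e ⊔ f) > (d ⊓ e) ⊔ (d ⊓ f)) :
    let p := (d ⊓ e) ⊔ (e ⊓ f) ⊔ (f ⊓ d)
    let q := (d ⊔ e) ⊓ (e ⊔ f) ⊓ (f ⊔ d)
    let u := (d ⊓ q) ⊔ p
    let v := (e ⊓ q) ⊔ p
    let w := (f ⊓ q) ⊔ p
    p ≠ q ∧ p ≠ u ∧ p ≠ v ∧ p ≠ w ∧ q ≠ u ∧ q ≠ v ∧ q ≠ w ∧
    u ≠ v ∧ u ≠ w ∧ v ≠ w := by
  intro p q u v w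
  have hp₁ : lowerMedian e f d = p := lowerMedian_rotate d e f
  have hp₂ : lowerMedian f d e = p := (lowerMedian_rotate e f d).trans hp₁
  have hq₁ : upperMedian e f d = q := upperMedian_rotate d e f
  have hq₂ : upperMedian f d e = q := (upperMedian_rotate e f d).trans hq₁
  have hvw := inf_upperMedian_sup_lowerMedian_sup e f d
  have hwu := inf_upperMedian_sup_lowerMedian_sup f d e
  have hvw' := inf_upperMedian_sup_lowerMedian_inf e f d
  have hwu' := inf_upperMedian_sup_lowerMedian_inf f d e
  rw [hp₁, hq₁] at hvw hvw'
  rw [hp₂, hq₂] at hwu hwu'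
  exact pairwise_ne_of_sup_eq_of_inf_eq (lowerMedian_lt_upperMedian h).ne
    (inf_upperMedian_sup_lowerMedian_sup d e f) ((sup_comm _ _).trans hwu) hvw
    (inf_upperMedian_sup_lowerMedian_inf d e f) ((inf_comm _ _).trans hwu') hvw'
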